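/- Conditional (product) decomposition of the multivariate deformed Pólya distribution: let 0 < τ₂ < τ₁ be reals, let m be a nonzero integer, let n, k be naturals with k ≥ 1, let 1 ≤ μ < k, and let β₁, …, β_k, β be reals. Let (y₁,…,y_k) be naturals with y₁ + ⋯ + y_k ≤ n, and set x_μ = y₁ + ⋯ + y_μ and β' = β − (β₁ + ⋯ + β_μ). Then the k-variate deformed Pólya mass factors as P_{n,β,m}(y₁,…,y_k) = P'_{n,β,m}(y₁,…,y_μ) · Q(y_{μ+1},…,y_k), where P' is the μ-variate deformed Pólya mass with parameters n, (β₁,…,β_μ), β, m, and Q is the (k−μ)-variate deformed Pólya mass with parameters n − x_μ, (β_{μ+1},…,β_k), β', m; here one assumes β is not equal to any of 0, 1, …, n−1 and β' is not equal to any of 0, 1, …, n − x_μ − 1 (so that the masses are well defined). In particular, the conditional distribution of the last k−μ coordinates given the first μ coordinates is a (k−μ)-variate deformed Pólya distribution. -/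

import Mathlib

open Finset

noncomputable def dnum (τ₁ τ₂ x : ℝ) : ℝ := (τ₁ ^ x - τ₂ ^ x) / (τ₁ - τ₂)

noncomputable def dfac (τ₁ τ₂ : ℝ) (r : ℕ) : ℝ :=
  ∏ j ∈ Finset.range r, dnum τ₁ τ₂ ((j : ℝ) + 1)

noncomputable def dfall (τ₁ τ₂ x : ℝ) (r : ℕ) : ℝ :=
  ∏ i ∈ Finset.range r, dnum τ₁ τ₂ (x - (i : ℝ))

noncomputable def dbinom (τ₁ τ₂ x : ℝ) (r : ℕ) : ℝ := dfall τ₁ τ₂ x r / dfac τ₁ τ₂ r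

noncomputable def dmulti (τ₁ τ₂ x : ℝ) {k : ℕ} (r : Fin k → ℕ) : ℝ :=
  dfall τ₁ τ₂ x (∑ j, r j) / ∏ j, dfac τ₁ τ₂ (r j)

/-- The `k`-variate deformed Pólya mass with parameters `n`, `(β₁,…,β_k)`, `β`
and nonzero integer `m`, built from `σ = (τ₁^{−m}, τ₂^{−m})`: for a tuple
`(y₁,…,y_k)` with `y₁+⋯+y_k ≤ n`, writing `y_{k+1} = n − (y₁+⋯+y_k)`,
`β_{k+1} = β − (β₁+⋯+β_k)` and `x_j = y₁+⋯+y_j`, it equals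
`τ₁^{−m Σ_j x_j(β_{j+1}−y_{j+1})} τ₂^{−m Σ_j (n−x_j)(β_j−y_j)}
  M_σ(n; y₁,…,y_k) (Π_{j=1}^{k+1} [β_j]_{y_j,σ}) / [β]_{n,σ}`. -/
noncomputable def polyaMass (τ₁ τ₂ : ℝ) (m : ℤ) (n : ℕ) {k : ℕ}
    (βv : Fin k → ℝ) (β : ℝ) (y : Fin k → ℕ) : ℝ :=
  let σ₁ : ℝ := τ₁ ^ (-m)
  let σ₂ : ℝ := τ₂ ^ (-m)
  let Y : Fin (k + 1) → ℕ := Fin.snoc y (n - ∑ j, y j)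
  let B : Fin (k + 1) → ℝ := Fin.snoc βv (β - ∑ j, βv j)
  let X : Fin k → ℕ := fun j => ∑ i ∈ Finset.Iic j, y i
  τ₁ ^ (-(m : ℝ) * ∑ j : Fin k, (X j : ℝ) * (B j.succ - (Y j.succ : ℝ))) *
    τ₂ ^ (-(m : ℝ) * ∑ j : Fin k, ((n : ℝ) - (X j : ℝ)) * (βv j - (y j : ℝ))) *
    dmulti σ₁ σ₂ (n : ℝ) y *
    (∏ j : Fin (k + 1), dfall σ₁ σ₂ (B j) (Y j)) / dfall σ₁ σ₂ β n

/-!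
Write the mass through the completed sequences `Y = (y₁,…,y_{k+1})` and `B = (β₁,…,β_{k+1})`,
and put `D = B - Y`. Since `x_j = Σ_{i≤j} Y_i` and `n - x_j = Σ_{i>j} Y_i`, the two exponents
become the pair sums `Σ_{i<j} Y_i D_j` and `Σ_{i<j} D_i Y_j`. Collapsing the entries
`μ+1,…,k+1` into a single entry (their sum) gives the data of `P'`, these entries alone give the
data of `Q`, and the pairs straddling the cut are exactly the pairs with the collapsed entry. The
multinomial coefficients factor through `[n]_{a+b} = [n]_a [n-a]_b`, and the falling factorial
`[β']_{n-x_μ}` contributed by the collapsed entry cancels the denominator of `Q`.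
-/

def ltPairSum {R : Type*} [NonUnitalNonAssocSemiring R] (L : ℕ) (f g : ℕ → R) : R :=
  ∑ j ∈ range L, (∑ i ∈ range j, f i) * g j

section ltPairSum

variable {R : Type*} [NonUnitalNonAssocSemiring R]

lemma ltPairSum_congr {L : ℕ} {f f' g g' : ℕ → R} (hf : ∀ i < L, f i = f' i)
    (hg : ∀ i < L, g i = g' i) : ltPairSum L f g = ltPairSum L f' g' :=
  sum_congr rfl fun j hj => by
    rw [mem_range] at hj
    rw [sum_congr rfl fun i hi => hf i ((mem_range.1 hi).trans hj), hg j hj]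

lemma ltPairSum_succ (L : ℕ) (f g : ℕ → R) :
    ltPairSum (L + 1) f g = ltPairSum L f g + (∑ i ∈ range L, f i) * g L :=
  sum_range_succ _ _

lemma ltPairSum_succ' (L : ℕ) (f g : ℕ → R) :
    ltPairSum (L + 1) f g = ∑ j ∈ range L, (∑ i ∈ range (j + 1), f i) * g (j + 1) := by
  simp [ltPairSum, sum_range_succ']

lemma ltPairSum_add (a b : ℕ) (f g : ℕ → R) :
    ltPairSum (a + b) f g = ltPairSum a f g + (∑ i ∈ range a, f i) * ∑ j ∈ range b, g (a + j) +
      ltPairSum b (fun j => f (a + j)) (fun j => g (a + j)) := by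
  simp only [ltPairSum, sum_range_add, add_mul, sum_add_distrib, mul_sum, add_assoc]

lemma ltPairSum_add_eq_succ_add {μ l : ℕ} {f f' g g' : ℕ → R} (hf : ∀ i < μ, f' i = f i)
    (hg : ∀ i < μ, g' i = g i) (hgμ : g' μ = ∑ j ∈ range l, g (μ + j)) :
    ltPairSum (μ + l) f g =
      ltPairSum (μ + 1) f' g' + ltPairSum l (fun j => f (μ + j)) (fun j => g (μ + j)) := by
  rw [ltPairSum_add, ltPairSum_succ, ltPairSum_congr hf hg,
    sum_congr rfl fun i hi => hf i (mem_range.1 hi), hgμ]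

end ltPairSum

lemma ltPairSum_eq_sum_mul_sub {R : Type*} [NonUnitalNonAssocRing R] (L : ℕ) (f g : ℕ → R) :
    ltPairSum L f g =
      ∑ i ∈ range L, f i * (∑ j ∈ range L, g j - ∑ j ∈ range (i + 1), g j) := by
  rw [sum_congr rfl fun i hi => by
    rw [← sum_Ico_eq_sub _ (Nat.succ_le_of_lt (mem_range.1 hi))]]
  simp only [ltPairSum, sum_mul, mul_sum]
  exact sum_comm' fun j i => by simp only [mem_range, mem_Ico]; omega

def finExtend {α : Type*} {k : ℕ} (f : Fin k → α) (c : α) (i : ℕ) : α :=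
  if h : i < k then f ⟨i, h⟩ else c

section finExtend

variable {α : Type*} {k : ℕ} (f : Fin k → α) (c : α)

lemma finExtend_of_lt {i : ℕ} (h : i < k) : finExtend f c i = f ⟨i, h⟩ := dif_pos h

@[simp]
lemma finExtend_val (j : Fin k) : finExtend f c j = f j := finExtend_of_lt f c j.isLt

@[simp]
lemma finExtend_self : finExtend f c k = c := dif_neg (lt_irrefl k)

lemma snoc_eq_finExtend (j : Fin (k + 1)) :
    Fin.snoc (α := fun _ => α) f c j = finExtend f c j := by
  induction j using Fin.lastCases <;> simp

@[to_additive]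
lemma prod_range_finExtend {M : Type*} [CommMonoid M] (g : α → M) :
    ∏ i ∈ range k, g (finExtend f c i) = ∏ j, g (f j) := by
  rw [← Fin.prod_univ_eq_prod_range (fun i => g (finExtend f c i))]
  simp

lemma sum_range_succ_finExtend [AddCommMonoid α] :
    ∑ i ∈ range (k + 1), finExtend f c i = ∑ j, f j + c := by
  rw [sum_range_succ, finExtend_self]
  exact congrArg (· + c) (sum_range_finExtend f c id)

lemma sum_Iic_eq_sum_range_finExtend [AddCommMonoid α] (j : Fin k) :
    ∑ i ∈ Iic j, f i = ∑ i ∈ range (j + 1), finExtend f c i := by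
  rw [Nat.range_succ_eq_Iic, ← Fin.map_valEmbedding_Iic, sum_map]
  simp

end finExtend

lemma last_eq_sum_tail_of_sum_range_eq {M : Type*} [AddCancelCommMonoid M] {μ l : ℕ}
    {Z Z' : ℕ → M} (h : ∀ i < μ, Z' i = Z i)
    (hsum : ∑ i ∈ range (μ + 1), Z' i = ∑ i ∈ range (μ + l), Z i) :
    Z' μ = ∑ j ∈ range l, Z (μ + j) := by
  rw [sum_range_succ, sum_congr rfl fun i hi => h i (mem_range.1 hi), sum_range_add] at hsum
  exact add_left_cancel hsum

lemma sum_univ_eq_sum_castLE_add {M : Type*} [AddCommMonoid M] {μ k : ℕ} (h : μ ≤ k)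
    (f : Fin k → M) :
    ∑ j, f j = ∑ j : Fin μ, f (Fin.castLE h j) + ∑ j : Fin (k - μ), f ⟨μ + j, by omega⟩ := by
  have hsplit := sum_range_add (finExtend f 0) μ (k - μ)
  rw [Nat.add_sub_cancel' h] at hsplit
  rw [← Fin.sum_univ_eq_sum_range (finExtend f 0) k, ← Fin.sum_univ_eq_sum_range (finExtend f 0) μ,
    ← Fin.sum_univ_eq_sum_range fun i => finExtend f 0 (μ + i)] at hsplit
  simp only [finExtend_val] at hsplit
  rw [hsplit]
  congr 1 <;> exact sum_congr rfl fun j _ => finExtend_of_lt f 0 _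

section Deformed

variable {σ₁ σ₂ : ℝ}

lemma dnum_ne_zero (h₁ : 0 ≤ σ₁) (h₂ : 0 ≤ σ₂) (hσ : σ₁ ≠ σ₂) {x : ℝ} (hx : x ≠ 0) :
    dnum σ₁ σ₂ x ≠ 0 :=
  div_ne_zero (sub_ne_zero.2 fun h => hσ ((Real.rpow_left_inj h₁ h₂ hx).1 h)) (sub_ne_zero.2 hσ)

lemma dfall_ne_zero (h₁ : 0 ≤ σ₁) (h₂ : 0 ≤ σ₂) (hσ : σ₁ ≠ σ₂) {x : ℝ} {r : ℕ}
    (hx : ∀ i : ℕ, i < r → x ≠ i) : dfall σ₁ σ₂ x r ≠ 0 :=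
  prod_ne_zero_iff.2 fun i hi => dnum_ne_zero h₁ h₂ hσ (sub_ne_zero.2 (hx i (mem_range.1 hi)))

variable (σ₁ σ₂)

lemma dfall_add (x : ℝ) (a b : ℕ) :
    dfall σ₁ σ₂ x (a + b) = dfall σ₁ σ₂ x a * dfall σ₁ σ₂ (x - a) b := by
  simp only [dfall, prod_range_add, Nat.cast_add, sub_sub]

lemma dfall_sum_range_add (Y : ℕ → ℕ) (a b c : ℕ) :
    dfall σ₁ σ₂ (∑ i ∈ range (a + c), Y i : ℕ) (∑ i ∈ range (a + b), Y i) =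
      dfall σ₁ σ₂ (∑ i ∈ range (a + c), Y i : ℕ) (∑ i ∈ range a, Y i) *
        dfall σ₁ σ₂ (∑ j ∈ range c, Y (a + j) : ℕ) (∑ j ∈ range b, Y (a + j)) := by
  rw [sum_range_add Y a b, dfall_add, sum_range_add Y a c]
  push_cast
  rw [add_sub_cancel_left]

end Deformed

/-- The mass `polyaMass` written in terms of the completed sequences `(y₁,…,y_{k+1})` and
`(β₁,…,β_{k+1})`, indexed from `0`; `n` and `β` are recovered as their sums. -/
noncomputable def seqPolyaMass (τ₁ τ₂ : ℝ) (m : ℤ) (k : ℕ) (Y : ℕ → ℕ) (B : ℕ → ℝ) : ℝ :=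
  let σ₁ : ℝ := τ₁ ^ (-m)
  let σ₂ : ℝ := τ₂ ^ (-m)
  let n : ℕ := ∑ i ∈ range (k + 1), Y i
  let D : ℕ → ℝ := fun i => B i - Y i
  τ₁ ^ (-(m : ℝ) * ltPairSum (k + 1) (fun i => (Y i : ℝ)) D) *
    τ₂ ^ (-(m : ℝ) * ltPairSum (k + 1) D (fun i => (Y i : ℝ))) *
    (dfall σ₁ σ₂ n (∑ i ∈ range k, Y i) / ∏ i ∈ range k, dfac σ₁ σ₂ (Y i)) *
    (∏ i ∈ range (k + 1), dfall σ₁ σ₂ (B i) (Y i)) / dfall σ₁ σ₂ (∑ i ∈ range (k + 1), B i) n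

section seqPolyaMass

variable {τ₁ τ₂ : ℝ} {m : ℤ}

lemma seqPolyaMass_congr {k : ℕ} {Y Y' : ℕ → ℕ} {B B' : ℕ → ℝ}
    (hY : ∀ i < k + 1, Y i = Y' i) (hB : ∀ i < k + 1, B i = B' i) :
    seqPolyaMass τ₁ τ₂ m k Y B = seqPolyaMass τ₁ τ₂ m k Y' B' := by
  have hYk : ∀ i ∈ range k, Y i = Y' i := fun i hi => hY i (by simp at hi; omega)
  have hY : ∀ i ∈ range (k + 1), Y i = Y' i := fun i hi => hY i (mem_range.1 hi)
  have hB : ∀ i ∈ range (k + 1), B i = B' i := fun i hi => hB i (mem_range.1 hi)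
  have hD : ∀ i < k + 1, B i - Y i = B' i - Y' i := fun i hi => by
    rw [hY i (mem_range.2 hi), hB i (mem_range.2 hi)]
  have hYr : ∀ i < k + 1, (Y i : ℝ) = Y' i := fun i hi => by rw [hY i (mem_range.2 hi)]
  simp only [seqPolyaMass, ltPairSum_congr hYr hD, ltPairSum_congr hD hYr, sum_congr rfl hY,
    sum_congr rfl hYk, sum_congr rfl hB, prod_congr rfl fun i hi => congrArg (dfac _ _) (hYk i hi),
    prod_congr rfl fun i hi => congrArg₂ (dfall _ _) (hB i hi) (hY i hi)]

theorem seqPolyaMass_eq_mul_tail (hτ₁ : 0 < τ₁) (hτ₂ : 0 < τ₂) {μ k : ℕ} (hμk : μ ≤ k)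
    {Y Y' : ℕ → ℕ} {B B' : ℕ → ℝ} (hY' : ∀ i < μ, Y' i = Y i) (hB' : ∀ i < μ, B' i = B i)
    (hYμ : Y' μ = ∑ j ∈ range (k - μ + 1), Y (μ + j))
    (hBμ : B' μ = ∑ j ∈ range (k - μ + 1), B (μ + j))
    (hne : dfall (τ₁ ^ (-m)) (τ₂ ^ (-m)) (B' μ) (Y' μ) ≠ 0) :
    seqPolyaMass τ₁ τ₂ m k Y B =
      seqPolyaMass τ₁ τ₂ m μ Y' B' *
        seqPolyaMass τ₁ τ₂ m (k - μ) (fun j => Y (μ + j)) (fun j => B (μ + j)) := by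
  obtain ⟨l, rfl⟩ := Nat.exists_eq_add_of_le hμk
  rw [Nat.add_sub_cancel_left] at hYμ hBμ ⊢
  have hY'r : ∀ i ∈ range μ, Y' i = Y i := fun i hi => hY' i (mem_range.1 hi)
  have hB'r : ∀ i ∈ range μ, B' i = B i := fun i hi => hB' i (mem_range.1 hi)
  have hsumY : ∑ i ∈ range (μ + (l + 1)), Y i = ∑ i ∈ range (μ + 1), Y' i := by
    rw [sum_range_succ Y' μ, hYμ, sum_congr rfl hY'r]
    exact sum_range_add Y μ (l + 1)
  have hsumB : ∑ i ∈ range (μ + (l + 1)), B i = ∑ i ∈ range (μ + 1), B' i := by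
    rw [sum_range_succ B' μ, hBμ, sum_congr rfl hB'r]
    exact sum_range_add B μ (l + 1)
  have hDμ : B' μ - Y' μ = ∑ j ∈ range (l + 1), (B (μ + j) - Y (μ + j)) := by
    rw [hBμ, hYμ, sum_sub_distrib, Nat.cast_sum]
  have hE₁ := ltPairSum_add_eq_succ_add (μ := μ) (l := l + 1) (f := fun i => (Y i : ℝ))
    (f' := fun i => (Y' i : ℝ)) (g := fun i => B i - Y i) (g' := fun i => B' i - Y' i)
    (fun i hi => by simp [hY' i hi]) (fun i hi => by simp [hY' i hi, hB' i hi]) hDμ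
  have hE₂ := ltPairSum_add_eq_succ_add (μ := μ) (l := l + 1) (g := fun i => (Y i : ℝ))
    (g' := fun i => (Y' i : ℝ)) (f := fun i => B i - Y i) (f' := fun i => B' i - Y' i)
    (fun i hi => by simp [hY' i hi, hB' i hi]) (fun i hi => by simp [hY' i hi])
    (by rw [hYμ, Nat.cast_sum])
  have hP : ∀ σ₁ σ₂ : ℝ, ∏ i ∈ range (μ + 1), dfall σ₁ σ₂ (B' i) (Y' i) =
      (∏ i ∈ range μ, dfall σ₁ σ₂ (B i) (Y i)) * dfall σ₁ σ₂ (B' μ) (Y' μ) := by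
    intro σ₁ σ₂
    rw [prod_range_succ, prod_congr rfl fun i hi => by rw [hY'r i hi, hB'r i hi]]
  simp only [seqPolyaMass]
  rw [show μ + l + 1 = μ + (l + 1) from rfl, hE₁, hE₂, mul_add, mul_add, Real.rpow_add hτ₁,
    Real.rpow_add hτ₂, dfall_sum_range_add, prod_range_add _ μ l, hP, prod_range_add _ μ (l + 1),
    ← hsumY, ← hsumB, ← hYμ, ← hBμ, sum_congr rfl hY'r,
    prod_congr rfl fun i hi => congrArg (dfac _ _) (hY'r i hi)]
  field_simp

theorem seqPolyaMass_eq_mul (hτ₁ : 0 < τ₁) (hτ₂ : 0 < τ₂) {μ k : ℕ} (hμk : μ ≤ k)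
    {Y Y' Y'' : ℕ → ℕ} {B B' B'' : ℕ → ℝ}
    (hY' : ∀ i < μ, Y' i = Y i) (hB' : ∀ i < μ, B' i = B i)
    (hY'' : ∀ i < k - μ, Y'' i = Y (μ + i)) (hB'' : ∀ i < k - μ, B'' i = B (μ + i))
    (hY'sum : ∑ i ∈ range (μ + 1), Y' i = ∑ i ∈ range (k + 1), Y i)
    (hB'sum : ∑ i ∈ range (μ + 1), B' i = ∑ i ∈ range (k + 1), B i)
    (hY''sum : ∑ i ∈ range (k - μ + 1), Y'' i = Y' μ)
    (hB''sum : ∑ i ∈ range (k - μ + 1), B'' i = B' μ)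
    (hne : dfall (τ₁ ^ (-m)) (τ₂ ^ (-m)) (B' μ) (Y' μ) ≠ 0) :
    seqPolyaMass τ₁ τ₂ m k Y B =
      seqPolyaMass τ₁ τ₂ m μ Y' B' * seqPolyaMass τ₁ τ₂ m (k - μ) Y'' B'' := by
  obtain ⟨l, rfl⟩ := Nat.exists_eq_add_of_le hμk
  rw [Nat.add_sub_cancel_left] at hY'' hB'' hY''sum hB''sum ⊢
  have hYμ := last_eq_sum_tail_of_sum_range_eq (l := l + 1) hY' hY'sum
  have hBμ := last_eq_sum_tail_of_sum_range_eq (l := l + 1) hB' hB'sum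
  have hY''l := last_eq_sum_tail_of_sum_range_eq (l := 1) hY'' (hY''sum.trans hYμ)
  have hB''l := last_eq_sum_tail_of_sum_range_eq (l := 1) hB'' (hB''sum.trans hBμ)
  rw [seqPolyaMass_eq_mul_tail hτ₁ hτ₂ hμk hY' hB' (by simpa using hYμ) (by simpa using hBμ) hne]
  rw [Nat.add_sub_cancel_left, seqPolyaMass_congr (k := l) (Y := fun j => Y (μ + j)) (Y' := Y'')
    (B := fun j => B (μ + j)) (B' := B'') (fun i hi => ?_) (fun i hi => ?_)]
  · rcases (Nat.lt_succ_iff.1 hi).lt_or_eq with hi | rfl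
    · exact (hY'' i hi).symm
    · simpa using hY''l.symm
  · rcases (Nat.lt_succ_iff.1 hi).lt_or_eq with hi | rfl
    · exact (hB'' i hi).symm
    · simpa using hB''l.symm

end seqPolyaMass

theorem polyaMass_eq_seqPolyaMass (τ₁ τ₂ : ℝ) (m : ℤ) {n k : ℕ} (βv : Fin k → ℝ) (β : ℝ)
    {y : Fin k → ℕ} (hy : ∑ j, y j ≤ n) :
    polyaMass τ₁ τ₂ m n βv β y =
      seqPolyaMass τ₁ τ₂ m k (finExtend y (n - ∑ j, y j)) (finExtend βv (β - ∑ j, βv j)) := by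
  set Y := finExtend y (n - ∑ j, y j) with hY
  set B := finExtend βv (β - ∑ j, βv j) with hB
  have hn : ∑ i ∈ range (k + 1), Y i = n := by rw [sum_range_succ_finExtend]; omega
  have hnR : ∑ i ∈ range (k + 1), (Y i : ℝ) = n := by exact_mod_cast hn
  have hβ : ∑ i ∈ range (k + 1), B i = β := by rw [sum_range_succ_finExtend]; ring
  have hX : ∀ j : Fin k, ∑ i ∈ Iic j, y i = ∑ i ∈ range (j + 1), Y i :=
    sum_Iic_eq_sum_range_finExtend y _
  have hE₁ : ∑ j : Fin k, ((∑ i ∈ range (j + 1), Y i : ℕ) : ℝ) * (B j.succ - Y j.succ) =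
      ltPairSum (k + 1) (fun i => (Y i : ℝ)) (fun i => B i - Y i) := by
    rw [ltPairSum_succ', ← Fin.sum_univ_eq_sum_range]
    simp only [Fin.val_succ, Nat.cast_sum]
  have hE₂ : ∑ j : Fin k, ((n : ℝ) - (∑ i ∈ range (j + 1), Y i : ℕ)) * (βv j - y j) =
      ltPairSum (k + 1) (fun i => B i - Y i) (fun i => (Y i : ℝ)) := by
    rw [ltPairSum_eq_sum_mul_sub, sum_range_succ, hnR, sub_self, mul_zero, add_zero,
      ← Fin.sum_univ_eq_sum_range]
    simp only [hY, hB, finExtend_val, Nat.cast_sum, mul_comm]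
  have hS : ∑ i ∈ range k, Y i = ∑ j, y j := sum_range_finExtend y _ id
  have hF : ∀ σ₁ σ₂, ∏ i ∈ range k, dfac σ₁ σ₂ (Y i) = ∏ j, dfac σ₁ σ₂ (y j) :=
    fun σ₁ σ₂ => prod_range_finExtend y _ (dfac σ₁ σ₂)
  simp only [polyaMass, seqPolyaMass, dmulti, snoc_eq_finExtend, ← hY, ← hB, hX, hE₁, hE₂, hn, hβ,
    hS, hF]
  rw [Fin.prod_univ_eq_prod_range fun i => dfall (τ₁ ^ (-m)) (τ₂ ^ (-m)) (B i) (Y i)]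

/-- Conditional (product) decomposition of the multivariate deformed Pólya
distribution: for `1 ≤ μ < k`, `y₁+⋯+y_k ≤ n`, with `x_μ = y₁+⋯+y_μ` and
`β' = β − (β₁+⋯+β_μ)`, assuming `β` avoids `0,…,n−1` and `β'` avoids
`0,…,n−x_μ−1`, the `k`-variate mass factors as
`P_{n,β,m}(y₁,…,y_k) = P'_{n,β,m}(y₁,…,y_μ) · Q(y_{μ+1},…,y_k)`,
where `P'` is the `μ`-variate mass with parameters `n, (β₁,…,β_μ), β, m` and
`Q` is the `(k−μ)`-variate mass with parameters `n−x_μ, (β_{μ+1},…,β_k), β', m`. -/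
theorem deformed_polya_conditional
    (τ₁ τ₂ : ℝ) (hτ₂ : 0 < τ₂) (hττ : τ₂ < τ₁) (m : ℤ) (hm : m ≠ 0)
    (n k μ : ℕ) (hμk : μ < k)
    (βv : Fin k → ℝ) (β : ℝ)
    (y : Fin k → ℕ) (hy : ∑ j, y j ≤ n)
    (hβ' : ∀ i : ℕ, i < n - ∑ j : Fin μ, y (Fin.castLE hμk.le j) →
      β - ∑ j : Fin μ, βv (Fin.castLE hμk.le j) ≠ i) :
    polyaMass τ₁ τ₂ m n βv β y =
      polyaMass τ₁ τ₂ m n (fun j : Fin μ => βv (Fin.castLE hμk.le j)) β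
          (fun j : Fin μ => y (Fin.castLE hμk.le j)) *
        polyaMass τ₁ τ₂ m (n - ∑ j : Fin μ, y (Fin.castLE hμk.le j))
          (fun j : Fin (k - μ) => βv ⟨μ + (j : ℕ), by have := j.isLt; omega⟩)
          (β - ∑ j : Fin μ, βv (Fin.castLE hμk.le j))
          (fun j : Fin (k - μ) => y ⟨μ + (j : ℕ), by have := j.isLt; omega⟩) := by
  have hτ₁ : 0 < τ₁ := hτ₂.trans hττ
  have hσ : τ₁ ^ (-m) ≠ τ₂ ^ (-m) := fun h =>
    hττ.ne' ((zpow_left_inj₀ hτ₁.le hτ₂.le (neg_ne_zero.2 hm)).1 h)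
  have hy_split := sum_univ_eq_sum_castLE_add hμk.le y
  have hβv_split := sum_univ_eq_sum_castLE_add hμk.le βv
  rw [polyaMass_eq_seqPolyaMass _ _ _ _ _ hy, polyaMass_eq_seqPolyaMass _ _ _ _ _ (by omega),
    polyaMass_eq_seqPolyaMass _ _ _ _ _ (by omega)]
  refine seqPolyaMass_eq_mul hτ₁ hτ₂ hμk.le (fun i hi => ?_) (fun i hi => ?_) (fun i hi => ?_)
    (fun i hi => ?_) ?_ ?_ ?_ ?_ ?_
  · rw [finExtend_of_lt _ _ hi, finExtend_of_lt _ _ (hi.trans hμk)]; rfl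
  · rw [finExtend_of_lt _ _ hi, finExtend_of_lt _ _ (hi.trans hμk)]; rfl
  · rw [finExtend_of_lt _ _ hi, finExtend_of_lt _ _ (by omega)]
  · rw [finExtend_of_lt _ _ hi, finExtend_of_lt _ _ (by omega)]
  · rw [sum_range_succ_finExtend, sum_range_succ_finExtend]; omega
  · rw [sum_range_succ_finExtend, sum_range_succ_finExtend]; ring
  · rw [sum_range_succ_finExtend, finExtend_self]; omega
  · rw [sum_range_succ_finExtend, finExtend_self]; ring
  · rw [finExtend_self, finExtend_self]
    exact dfall_ne_zero (zpow_pos hτ₁ _).le (zpow_pos hτ₂ _).le hσ hβ'
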